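/- Let D be a decision tree for (H, T) with |H| ≥ 2. Then the tests of the sepcover of D cover at least a quarter of U: |⋃_{t ∈ sepcover(D)} ξ(t)| ≥ |U|/4. -/
import Mathlib


open Finset

universe u

inductive DTree (α : Type u) : Type u where
  | leaf : α → DTree α
  | node : Finset (Finset α) → (Finset α → DTree α) → DTree α

variable {α : Type*} [DecidableEq α]

noncomputable def DTree.cost : DTree α → α → ℕ
  | .leaf _, _ => 0
  | .node t c, h =>
      if hR : ∃ R ∈ t, h ∈ R then 1 + (c hR.choose).cost h else 0

noncomputable def costW (H : Finset α) (D : DTree α) : ℕ := H.sup (fun h => D.cost h)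

noncomputable def costA (H : Finset α) (D : DTree α) : ℕ := ∑ h ∈ H, D.cost h

def IsTest (H : Finset α) (t : Finset (Finset α)) : Prop :=
  (∀ R ∈ t, R.Nonempty) ∧ (∀ R ∈ t, ∀ R' ∈ t, R ≠ R' → Disjoint R R') ∧ t.sup id = H

def Separates (H : Finset α) (T : Finset (Finset (Finset α))) : Prop :=
  ∀ h₁ ∈ H, ∀ h₂ ∈ H, h₁ ≠ h₂ → ∃ t ∈ T, ∃ R ∈ t, h₁ ∈ R ∧ h₂ ∉ R

def Valid (T : Finset (Finset (Finset α))) : Finset α → DTree α → Prop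
  | Hv, .leaf h => Hv = {h}
  | Hv, .node t c => t ∈ T ∧ ∀ R ∈ t, (R ∩ Hv).Nonempty → Valid T (R ∩ Hv) (c R)

def PrecValid (T : Finset (Finset (Finset α)))
    (le : Finset (Finset α) → Finset (Finset α) → Prop) :
    Finset (Finset (Finset α)) → Finset α → DTree α → Prop
  | _, Hv, .leaf h => Hv = {h}
  | P, Hv, .node t c =>
      t ∈ T ∧ (∀ t' ∈ T, le t' t → t' ≠ t → t' ∈ P) ∧
      ∀ R ∈ t, (R ∩ Hv).Nonempty → PrecValid T le (insert t P) (R ∩ Hv) (c R)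

noncomputable def sumSizes : DTree α → Finset α → ℕ
  | .leaf _, _ => 0
  | .node t c, Hv =>
      Hv.card + ∑ R ∈ t.filter (fun R => (R ∩ Hv).Nonempty), sumSizes (c R) (R ∩ Hv)

noncomputable def nleaves : DTree α → Finset α → ℕ
  | .leaf _, _ => 1
  | .node t c, Hv => ∑ R ∈ t.filter (fun R => (R ∩ Hv).Nonempty), nleaves (c R) (R ∩ Hv)

def xiT (H : Finset α) (t : Finset (Finset α)) : Finset α :=
  H.filter (fun h => ∃ R ∈ t, h ∈ R ∧ 4 * R.card ≤ 3 * H.card)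

/-- `SepAt n D Hv P k` holds if, starting from the current node (with candidate set
`Hv`), there is a node `v` at depth `k` such that `P` is the set of tests labeling the
internal nodes on the path to `v` (including `v` itself if internal), and after deleting
the nodes of this path every remaining component (hanging subtree) has at most `n/2`
leaves (expressed as `2 · leaves ≤ n`). -/
inductive SepAt {α : Type*} [DecidableEq α] (n : ℕ) :
    DTree α → Finset α → Finset (Finset (Finset α)) → ℕ → Prop where
  | leaf (h : α) (Hv : Finset α) : SepAt n (.leaf h) Hv ∅ 0
  | here (t : Finset (Finset α)) (c : Finset α → DTree α) (Hv : Finset α) :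
      (∀ R ∈ t, (R ∩ Hv).Nonempty → 2 * nleaves (c R) (R ∩ Hv) ≤ n) →
      SepAt n (.node t c) Hv {t} 0
  | step (t : Finset (Finset α)) (c : Finset α → DTree α) (Hv R : Finset α)
      (P : Finset (Finset (Finset α))) (k : ℕ) :
      R ∈ t → (R ∩ Hv).Nonempty →
      (∀ Rp ∈ t, (Rp ∩ Hv).Nonempty → Rp ≠ R → 2 * nleaves (c Rp) (Rp ∩ Hv) ≤ n) →
      SepAt n (c R) (R ∩ Hv) P k →
      SepAt n (.node t c) Hv (insert t P) (k + 1)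

lemma reply_subset {H : Finset α} {t : Finset (Finset α)} (ht : IsTest H t)
    {R : Finset α} (hR : R ∈ t) : R ⊆ H := by
  have := Finset.le_sup (f := id) hR
  rw [ht.2.2] at this
  exact this

lemma exists_reply {H : Finset α} {t : Finset (Finset α)} (ht : IsTest H t)
    {h : α} (hh : h ∈ H) : ∃ R ∈ t, h ∈ R := by
  have : h ∈ t.sup id := by rw [ht.2.2]; exact hh
  simpa using Finset.mem_sup.1 this

lemma sum_inter_card {H : Finset α} {t : Finset (Finset α)} (ht : IsTest H t)
    {Hv : Finset α} (hsub : Hv ⊆ H) :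
    ∑ R ∈ t, (R ∩ Hv).card = Hv.card := by
  rw [← Finset.card_biUnion (by
    intro R hR R' hR' hne'
    exact (ht.2.1 R hR R' hR' hne').mono Finset.inter_subset_left
      Finset.inter_subset_left)]
  congr 1
  apply Finset.Subset.antisymm
  · intro x hx
    simp only [Finset.mem_biUnion, Finset.mem_inter] at hx
    obtain ⟨R, _, _, hxv⟩ := hx
    exact hxv
  · intro x hx
    obtain ⟨R, hRt, hxR⟩ := exists_reply ht (hsub hx)
    exact Finset.mem_biUnion.2 ⟨R, hRt, Finset.mem_inter.2 ⟨hxR, hx⟩⟩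

lemma nleaves_eq_card {H : Finset α} {T : Finset (Finset (Finset α))}
    (htest : ∀ t ∈ T, IsTest H t) :
    ∀ (D : DTree α) (Hv : Finset α), Valid T Hv D → Hv ⊆ H →
      nleaves D Hv = Hv.card := by
  intro D
  induction D with
  | leaf h =>
      intro Hv hval _
      have hv : Hv = {h} := hval
      rw [hv]
      simp [nleaves]
  | node t c ih =>
      intro Hv hval hsub
      obtain ⟨htT, hch⟩ := hval
      have htt := htest t htT
      rw [nleaves]
      have hcongr : ∀ R ∈ t.filter (fun R => (R ∩ Hv).Nonempty),
          nleaves (c R) (R ∩ Hv) = (R ∩ Hv).card := by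
        intro R hR
        rw [Finset.mem_filter] at hR
        exact ih R (R ∩ Hv) (hch R hR.1 hR.2) (Finset.inter_subset_right.trans hsub)
      rw [Finset.sum_congr rfl hcongr]
      rw [← sum_inter_card htt hsub]
      apply Finset.sum_subset (Finset.filter_subset _ _)
      intro R hR hnR
      rw [Finset.mem_filter, not_and] at hnR
      have : ¬ (R ∩ Hv).Nonempty := hnR hR
      rw [Finset.not_nonempty_iff_eq_empty] at this
      rw [this]
      simp

lemma main_lemma {H : Finset α} (hH : 2 ≤ H.card)
    {T : Finset (Finset (Finset α))} (htest : ∀ t ∈ T, IsTest H t)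
    {D : DTree α} {Hv : Finset α} {P : Finset (Finset (Finset α))} {k : ℕ}
    (hsc : SepAt H.card D Hv P k) :
    Valid T Hv D → Hv ⊆ H → H.card + 1 ≤ 2 * Hv.card →
    (∀ P' k', SepAt H.card D Hv P' k' → k ≤ k') →
    ∃ B : Finset α, 2 * B.card ≤ H.card ∧ Hv ⊆ B ∪ P.sup (xiT H) := by
  induction hsc with
  | leaf h Hv =>
      intro hval _ hbig _
      have hv : Hv = {h} := hval
      rw [hv, Finset.card_singleton] at hbig
      omega
  | here t c Hv hle =>
      intro hval hsub hbig _
      obtain ⟨htT, hch⟩ := hval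
      have htt := htest t htT
      have good : ∀ R ∈ t, 4 * (R ∩ Hv).card + H.card ≤ 4 * Hv.card →
          ∀ h, h ∈ R → h ∈ Hv → h ∈ xiT H t := by
        intro R hRt hg h hhR hhv
        have hRH : R ⊆ H := reply_subset htt hRt
        have h1 : (R ∪ Hv).card + (R ∩ Hv).card = R.card + Hv.card :=
          Finset.card_union_add_card_inter R Hv
        have h2 : (R ∪ Hv).card ≤ H.card :=
          Finset.card_le_card (Finset.union_subset hRH hsub)
        exact Finset.mem_filter.2 ⟨hsub hhv, R, hRt, hhR, by omega⟩
      by_cases hbad : ∃ B₀ ∈ t, 4 * Hv.card < 4 * (B₀ ∩ Hv).card + H.card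
      · obtain ⟨B₀, hB₀t, hB₀⟩ := hbad
        have hBne : (B₀ ∩ Hv).Nonempty := by
          rw [← Finset.card_pos]; omega
        have hnl : nleaves (c B₀) (B₀ ∩ Hv) = (B₀ ∩ Hv).card :=
          nleaves_eq_card htest _ _ (hch B₀ hB₀t hBne)
            (Finset.inter_subset_right.trans hsub)
        have hBcard : 2 * (B₀ ∩ Hv).card ≤ H.card := by
          have := hle B₀ hB₀t hBne; omega
        refine ⟨B₀ ∩ Hv, hBcard, ?_⟩
        intro h hh
        rw [Finset.mem_union]
        obtain ⟨R', hR't, hhR'⟩ := exists_reply htt (hsub hh)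
        by_cases hg : 4 * (R' ∩ Hv).card + H.card ≤ 4 * Hv.card
        · right
          rw [Finset.sup_singleton]
          exact good R' hR't hg h hhR' hh
        · left
          have heq : R' = B₀ := by
            by_contra hne'
            have hdisj := htt.2.1 R' hR't B₀ hB₀t hne'
            have hd2 : Disjoint (R' ∩ Hv) (B₀ ∩ Hv) :=
              hdisj.mono Finset.inter_subset_left Finset.inter_subset_left
            have hcu := Finset.card_union_of_disjoint hd2
            have hsub2 : (R' ∩ Hv) ∪ (B₀ ∩ Hv) ⊆ Hv :=
              Finset.union_subset Finset.inter_subset_right Finset.inter_subset_right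
            have hle2 := Finset.card_le_card hsub2
            omega
          rw [← heq]
          exact Finset.mem_inter.2 ⟨hhR', hh⟩
      · push_neg at hbad
        refine ⟨∅, by simp, ?_⟩
        intro h hh
        rw [Finset.mem_union]
        right
        rw [Finset.sup_singleton]
        obtain ⟨R', hR't, hhR'⟩ := exists_reply htt (hsub hh)
        exact good R' hR't (hbad R' hR't) h hhR' hh
  | step t c Hv R P k hRt hne hoth hrec ih =>
      intro hval hsub hbig hmin
      obtain ⟨htT, hch⟩ := hval
      have htt := htest t htT
      have hvalR := hch R hRt hne
      have hRHv : R ∩ Hv ⊆ H := Finset.inter_subset_right.trans hsub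
      have hbigR : H.card + 1 ≤ 2 * (R ∩ Hv).card := by
        by_contra hcon
        push_neg at hcon
        have hnl : nleaves (c R) (R ∩ Hv) = (R ∩ Hv).card :=
          nleaves_eq_card htest _ _ hvalR hRHv
        have hhere : SepAt H.card (.node t c) Hv {t} 0 := by
          apply SepAt.here
          intro Rp hRp hRpne
          by_cases hRR : Rp = R
          · subst hRR
            omega
          · exact hoth Rp hRp hRpne hRR
        have := hmin {t} 0 hhere
        omega
      have hminR : ∀ P' k', SepAt H.card (c R) (R ∩ Hv) P' k' → k ≤ k' := by
        intro P' k' hs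
        have := hmin (insert t P') (k' + 1) (SepAt.step t c Hv R P' k' hRt hne hoth hs)
        omega
      obtain ⟨B, hB, hcov⟩ := ih hvalR hRHv hbigR hminR
      refine ⟨B, hB, ?_⟩
      intro h hh
      rw [Finset.mem_union]
      by_cases hhR : h ∈ R
      · have hmem := hcov (Finset.mem_inter.2 ⟨hhR, hh⟩)
        rw [Finset.mem_union] at hmem
        rcases hmem with h1 | h1
        · exact Or.inl h1
        · right
          rw [Finset.mem_sup] at h1 ⊢
          obtain ⟨t', ht', hx⟩ := h1
          exact ⟨t', Finset.mem_insert_of_mem ht', hx⟩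
      · right
        obtain ⟨R', hR't, hhR'⟩ := exists_reply htt (hsub hh)
        have hne' : R' ≠ R := fun e => hhR (e ▸ hhR')
        have hdisj := htt.2.1 R' hR't R hRt hne'
        have hd2 : Disjoint R' (R ∩ Hv) := hdisj.mono_right Finset.inter_subset_left
        have hcu := Finset.card_union_of_disjoint hd2
        have hle2 : (R' ∪ R ∩ Hv).card ≤ H.card :=
          Finset.card_le_card (Finset.union_subset (reply_subset htt hR't) hRHv)
        have hx : h ∈ xiT H t :=
          Finset.mem_filter.2 ⟨hsub hh, R', hR't, hhR', by omega⟩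
        exact Finset.mem_sup.2 ⟨t, Finset.mem_insert_self t P, hx⟩

/-- the sepcover of D (tests on the path to a sepcover node closest to
the root) covers at least a quarter of U: |⋃_{t ∈ sepcover(D)} ξ(t)| ≥ |U|/4. -/
theorem stmt14 {α : Type*} [DecidableEq α]
    (H : Finset α) (hH : 2 ≤ H.card)
    (T : Finset (Finset (Finset α)))
    (htest : ∀ t ∈ T, IsTest H t)
    (hsep : Separates H T)
    (D : DTree α) (hD : Valid T H D)
    (P : Finset (Finset (Finset α))) (k : ℕ)
    (hsc : SepAt H.card D H P k)
    (hclosest : ∀ (P' : Finset (Finset (Finset α))) (k' : ℕ), SepAt H.card D H P' k' → k ≤ k') :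
    (T.sup (xiT H)).card ≤ 4 * (P.sup (xiT H)).card := by
  obtain ⟨B, hB, hcov⟩ :=
    main_lemma hH htest hsc hD (Finset.Subset.refl H) (by omega) hclosest
  have hU : T.sup (xiT H) ⊆ H := by
    intro x hx
    obtain ⟨t, _, hxt⟩ := Finset.mem_sup.1 hx
    exact (Finset.filter_subset _ _) hxt
  have h1 : (T.sup (xiT H)).card ≤ H.card := Finset.card_le_card hU
  have h2 : H.card ≤ (B ∪ P.sup (xiT H)).card := Finset.card_le_card hcov
  have h3 : (B ∪ P.sup (xiT H)).card ≤ B.card + (P.sup (xiT H)).card :=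
    Finset.card_union_le _ _
  omega
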